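/- arXiv:2210.13032 — 7 statements merged into one kernel-verified Lean document; each statement's English description precedes it below -/
import Mathlib

section
/- Let N, K be natural numbers with N ≥ 1, and let z₀, z₁, …, z_K ∈ ℂ^N be vectors such that the matrix S̄ = (1/(K+1)) Σ_{k=0}^{K} z_k z_kᴴ is Hermitian positive definite. Then for every N×N complex Hermitian positive definite matrix C, one has (K+1)·Real.log(det C).re + Σ_{k=0}^{K} Re(z_kᴴ C⁻¹ z_k) ≥ (K+1)·Real.log(det S̄).re + (K+1)·N, with equality if and only if C = S̄. Equivalently, the complex Gaussian likelihood (π^N det C)^{−(K+1)} exp(−Σ_k z_kᴴ C⁻¹ z_k) over Hermitian positive definite C is uniquely maximized at C = S̄ (the sample covariance matrix). -/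
/-!
For positive definite `S` and `C`, the matrix `√S C⁻¹ √S` is positive definite and similar to
`C⁻¹ S`, so its eigenvalues `λᵢ > 0` satisfy `∑ λᵢ = tr (C⁻¹ S)` and `∏ λᵢ = det S / det C`.
Summing `λ - 1 - log λ ≥ 0`, with equality only at `λ = 1`, over the eigenvalues gives
`log det S + N ≤ log det C + tr (C⁻¹ S)`, with equality iff `√S C⁻¹ √S = 1`, i.e. `C = S`.
Since `∑ₖ zₖᴴ C⁻¹ zₖ = tr (C⁻¹ ∑ₖ zₖ zₖᴴ) = (K + 1) tr (C⁻¹ S̄)`, the likelihood functional is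
`K + 1` times the right-hand side for `S = S̄`.
-/

open Matrix
open scoped ComplexOrder

theorem Real.sub_one_sub_log_nonneg {x : ℝ} (hx : 0 < x) : 0 ≤ x - 1 - Real.log x := by
  linarith [Real.log_le_sub_one_of_pos hx]

theorem Real.sub_one_sub_log_eq_zero_iff {x : ℝ} (hx : 0 < x) :
    x - 1 - Real.log x = 0 ↔ x = 1 := by
  refine ⟨fun h => by_contra fun hne => ?_, fun h => by simp [h]⟩
  linarith [Real.log_lt_sub_one_of_pos hx hne]

namespace Matrix

theorem trace_mul_sum_vecMulVec {n ι α : Type*} [Fintype n] [CommSemiring α] (s : Finset ι)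
    (T : Matrix n n α) (x y : ι → n → α) :
    (T * ∑ k ∈ s, vecMulVec (x k) (y k)).trace = ∑ k ∈ s, y k ⬝ᵥ (T *ᵥ x k) := by
  rw [Finset.mul_sum, trace_sum]
  exact Finset.sum_congr rfl fun k _ => by rw [mul_vecMulVec, trace_vecMulVec, dotProduct_comm]

variable {n 𝕜 : Type*} [Fintype n] [DecidableEq n] [RCLike 𝕜] {A : Matrix n n 𝕜}

theorem IsHermitian.eq_one_of_eigenvalues_eq_one (hA : A.IsHermitian)
    (h : ∀ i, hA.eigenvalues i = 1) : A = 1 := by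
  rw [hA.spectral_theorem, show RCLike.ofReal ∘ hA.eigenvalues = 1 by ext i; simp [h i],
    Pi.one_def, diagonal_one, map_one]

theorem IsHermitian.re_trace_eq_sum_eigenvalues (hA : A.IsHermitian) :
    RCLike.re A.trace = ∑ i, hA.eigenvalues i := by
  simp [hA.trace_eq_sum_eigenvalues]

theorem PosDef.log_re_det_eq_sum_log_eigenvalues (hA : A.PosDef) :
    Real.log (RCLike.re A.det) = ∑ i, Real.log (hA.isHermitian.eigenvalues i) := by
  rw [hA.isHermitian.det_eq_prod_eigenvalues, ← RCLike.ofReal_prod, RCLike.ofReal_re,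
    Real.log_prod fun i _ => (hA.eigenvalues_pos i).ne']

theorem PosDef.re_trace_sub_log_re_det_sub_card (hA : A.PosDef) :
    RCLike.re A.trace - Real.log (RCLike.re A.det) - Fintype.card n =
      ∑ i, (hA.isHermitian.eigenvalues i - 1 - Real.log (hA.isHermitian.eigenvalues i)) := by
  rw [hA.isHermitian.re_trace_eq_sum_eigenvalues, hA.log_re_det_eq_sum_log_eigenvalues,
    Finset.sum_sub_distrib, Finset.sum_sub_distrib, Finset.sum_const, Finset.card_univ,
    nsmul_one]
  ring

theorem PosDef.log_re_det_add_card_le_re_trace (hA : A.PosDef) :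
    Real.log (RCLike.re A.det) + Fintype.card n ≤ RCLike.re A.trace := by
  have hsum := hA.re_trace_sub_log_re_det_sub_card
  have hnonneg := Finset.sum_nonneg fun i (_ : i ∈ Finset.univ) =>
    Real.sub_one_sub_log_nonneg (hA.eigenvalues_pos i)
  linarith

theorem PosDef.re_trace_eq_log_re_det_add_card_iff (hA : A.PosDef) :
    RCLike.re A.trace = Real.log (RCLike.re A.det) + Fintype.card n ↔ A = 1 := by
  refine ⟨fun h => hA.isHermitian.eq_one_of_eigenvalues_eq_one fun i => ?_, ?_⟩
  · have hsum := hA.re_trace_sub_log_re_det_sub_card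
    rw [h, add_sub_cancel_left, sub_self, eq_comm, Finset.sum_eq_zero_iff_of_nonneg] at hsum
    · exact (Real.sub_one_sub_log_eq_zero_iff (hA.eigenvalues_pos i)).1 (hsum i (by simp))
    · exact fun i _ => Real.sub_one_sub_log_nonneg (hA.eigenvalues_pos i)
  · rintro rfl
    simp

theorem PosDef.re_det_pos (hA : A.PosDef) : 0 < RCLike.re A.det :=
  (RCLike.pos_iff.1 hA.det_pos).1

theorem PosDef.ofReal_re_det (hA : A.PosDef) : ((RCLike.re A.det : ℝ) : 𝕜) = A.det :=
  RCLike.conj_eq_iff_re.1 (RCLike.conj_eq_iff_im.2 (RCLike.pos_iff.1 hA.det_pos).2)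

section Whiten

open scoped MatrixOrder

variable {S C : Matrix n n 𝕜}

noncomputable def whiten (S C : Matrix n n 𝕜) : Matrix n n 𝕜 :=
  CFC.sqrt S * C⁻¹ * CFC.sqrt S

theorem PosDef.isUnit_sqrt (hS : S.PosDef) : IsUnit (CFC.sqrt S) := by
  rw [isUnit_iff_isUnit_det]
  refine isUnit_of_mul_isUnit_left (y := (CFC.sqrt S).det) ?_
  rw [← det_mul, CFC.sqrt_mul_sqrt_self S hS.posSemidef.nonneg, ← isUnit_iff_isUnit_det]
  exact hS.isUnit

theorem posDef_whiten (hS : S.PosDef) (hC : C.PosDef) : (whiten S C).PosDef := by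
  have hQ : (CFC.sqrt S)ᴴ = CFC.sqrt S := (CFC.sqrt_nonneg S).posSemidef.isHermitian
  simpa only [whiten, hQ] using
    hC.inv.conjTranspose_mul_mul_same (mulVec_injective_of_isUnit hS.isUnit_sqrt)

theorem trace_whiten (hS : S.PosSemidef) : (whiten S C).trace = (C⁻¹ * S).trace := by
  rw [whiten, mul_assoc, trace_mul_comm, mul_assoc, CFC.sqrt_mul_sqrt_self S hS.nonneg]

theorem PosDef.log_re_det_whiten (hS : S.PosDef) (hC : C.PosDef) :
    Real.log (RCLike.re (whiten S C).det) =
      Real.log (RCLike.re S.det) - Real.log (RCLike.re C.det) := by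
  have hdet : RCLike.re (whiten S C).det = RCLike.re S.det / RCLike.re C.det := by
    rw [whiten, det_mul, det_mul, det_nonsing_inv, Ring.inverse_eq_inv', mul_right_comm, ← det_mul,
      CFC.sqrt_mul_sqrt_self S hS.posSemidef.nonneg, ← hC.ofReal_re_det, ← RCLike.ofReal_inv,
      RCLike.re_mul_ofReal, RCLike.ofReal_re, div_eq_mul_inv]
  rw [hdet, Real.log_div hS.re_det_pos.ne' hC.re_det_pos.ne']

theorem whiten_eq_one_iff (hS : S.PosSemidef) (hC : C.PosDef) : whiten S C = 1 ↔ C = S := by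
  rw [whiten, mul_assoc, mul_eq_one_comm, mul_assoc, CFC.sqrt_mul_sqrt_self S hS.nonneg]
  constructor
  · intro h
    rw [← nonsing_inv_nonsing_inv C ((isUnit_iff_isUnit_det C).1 hC.isUnit)]
    exact inv_eq_right_inv h
  · rintro rfl
    exact nonsing_inv_mul C ((isUnit_iff_isUnit_det C).1 hC.isUnit)

theorem PosDef.log_re_det_add_card_le_log_re_det_add_re_trace_inv_mul (hS : S.PosDef)
    (hC : C.PosDef) :
    Real.log (RCLike.re S.det) + Fintype.card n ≤
      Real.log (RCLike.re C.det) + RCLike.re (C⁻¹ * S).trace := by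
  have h := (posDef_whiten hS hC).log_re_det_add_card_le_re_trace
  rw [hS.log_re_det_whiten hC, trace_whiten hS.posSemidef] at h
  linarith

theorem PosDef.log_re_det_add_re_trace_inv_mul_eq_iff (hS : S.PosDef) (hC : C.PosDef) :
    Real.log (RCLike.re C.det) + RCLike.re (C⁻¹ * S).trace =
      Real.log (RCLike.re S.det) + Fintype.card n ↔ C = S := by
  rw [← whiten_eq_one_iff hS.posSemidef hC,
    ← (posDef_whiten hS hC).re_trace_eq_log_re_det_add_card_iff, hS.log_re_det_whiten hC,
    trace_whiten hS.posSemidef]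
  constructor <;> intro h <;> linarith

end Whiten

end Matrix

theorem stmt3_general (N K : ℕ) (z : Fin (K + 1) → Fin N → ℂ)
    (Sbar : Matrix (Fin N) (Fin N) ℂ)
    (hSbar : Sbar = ((K : ℝ) + 1)⁻¹ • ∑ k, vecMulVec (z k) (star (z k)))
    (hpos : Sbar.PosDef)
    (C : Matrix (Fin N) (Fin N) ℂ) (hC : C.PosDef) :
    (((K : ℝ) + 1) * Real.log C.det.re + ∑ k, (star (z k) ⬝ᵥ (C⁻¹ *ᵥ z k)).re
      ≥ ((K : ℝ) + 1) * Real.log Sbar.det.re + ((K : ℝ) + 1) * (N : ℝ)) ∧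
    (((K : ℝ) + 1) * Real.log C.det.re + ∑ k, (star (z k) ⬝ᵥ (C⁻¹ *ᵥ z k)).re
        = ((K : ℝ) + 1) * Real.log Sbar.det.re + ((K : ℝ) + 1) * (N : ℝ)
      ↔ C = Sbar) := by
  set c : ℝ := (K : ℝ) + 1
  have hc : 0 < c := by positivity
  have hsum : ∑ k, (star (z k) ⬝ᵥ (C⁻¹ *ᵥ z k)).re = c * (C⁻¹ * Sbar).trace.re := by
    rw [← Complex.re_sum, ← trace_mul_sum_vecMulVec, (inv_smul_eq_iff₀ hc.ne').1 hSbar.symm,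
      mul_smul_comm, trace_smul, Complex.smul_re, smul_eq_mul]
  have hle := hpos.log_re_det_add_card_le_log_re_det_add_re_trace_inv_mul hC
  have hiff := hpos.log_re_det_add_re_trace_inv_mul_eq_iff hC
  simp only [RCLike.re_to_complex, Fintype.card_fin] at hle hiff
  rw [hsum, ← mul_add, ← mul_add, ge_iff_le, mul_right_inj' hc.ne', hiff]
  exact ⟨mul_le_mul_of_nonneg_left hle hc.le, Iff.rfl⟩

/-- Goodman's result. For data `z₀, …, z_K` whose sample covariance
`S̄ = (1/(K+1)) Σ_k z_k z_kᴴ` is Hermitian positive definite, the negative complex Gaussian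
log-likelihood functional `(K+1)·log(det C) + Σ_k Re(z_kᴴ C⁻¹ z_k)` over Hermitian positive
definite matrices `C` is at least `(K+1)·log(det S̄) + (K+1)·N`, with equality iff `C = S̄`;
i.e. the Gaussian likelihood is uniquely maximized at the sample covariance matrix. -/
theorem stmt3 (N K : ℕ) (hN : 1 ≤ N) (z : Fin (K + 1) → Fin N → ℂ)
    (Sbar : Matrix (Fin N) (Fin N) ℂ)
    (hSbar : Sbar = ((K : ℝ) + 1)⁻¹ • ∑ k, vecMulVec (z k) (star (z k)))
    (hpos : Sbar.PosDef)
    (C : Matrix (Fin N) (Fin N) ℂ) (hC : C.PosDef) :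
    (((K : ℝ) + 1) * Real.log C.det.re + ∑ k, (star (z k) ⬝ᵥ (C⁻¹ *ᵥ z k)).re
      ≥ ((K : ℝ) + 1) * Real.log Sbar.det.re + ((K : ℝ) + 1) * (N : ℝ)) ∧
    (((K : ℝ) + 1) * Real.log C.det.re + ∑ k, (star (z k) ⬝ᵥ (C⁻¹ *ᵥ z k)).re
        = ((K : ℝ) + 1) * Real.log Sbar.det.re + ((K : ℝ) + 1) * (N : ℝ)
      ↔ C = Sbar) :=
  stmt3_general N K z Sbar hSbar hpos C hC
end

section
/- Let N be a positive natural number, let S be an N×N complex Hermitian positive definite matrix, let g ∈ ℂ^N be nonzero, and let z ∈ ℂ^N. Then the minimum over s ∈ ℝ of Re(det(S + (z − s·g)(z − s·g)ᴴ)) equals det(S)·(1 + Re(zᴴ S⁻¹ z) − (Re(gᴴ S⁻¹ z))²/(gᴴ S⁻¹ g)), where det(S) is a positive real number, and the minimum is attained at ŝ = Re(gᴴ S⁻¹ z)/(gᴴ S⁻¹ g). -/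
/-!
By the matrix determinant lemma, `det (S + w wᴴ) = det S · (1 + wᴴ S⁻¹ w)`, and `det S` is a
positive real. With `w = z - s g` and `S⁻¹` Hermitian, `Re (wᴴ S⁻¹ w)` is the real quadratic
`a - 2 s b + s² c` in `s`, with `a = Re (zᴴ S⁻¹ z)`, `b = Re (gᴴ S⁻¹ z)` and `c = gᴴ S⁻¹ g > 0`;
it is minimised at its vertex `s = b / c`.
-/

open Matrix
open scoped ComplexOrder

theorem Matrix.det_add_vecMulVec {n α : Type*} [Fintype n] [DecidableEq n] [CommRing α]
    {A : Matrix n n α} (hA : IsUnit A.det) (u v : n → α) :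
    (A + vecMulVec u v).det = A.det * (1 + v ⬝ᵥ (A⁻¹ *ᵥ u)) := by
  have hfactor : A + vecMulVec u v =
      A * (1 + replicateCol Unit (A⁻¹ *ᵥ u) * replicateRow Unit v) := by
    rw [mul_add, mul_one, ← Matrix.mul_assoc, ← replicateCol_mulVec, mulVec_mulVec,
      mul_nonsing_inv A hA, one_mulVec, vecMulVec_eq Unit]
  rw [hfactor, det_mul, det_one_add_replicateCol_mul_replicateRow]

theorem Matrix.IsHermitian.star_dotProduct_mulVec {n 𝕜 : Type*} [Fintype n] [CommRing 𝕜]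
    [StarRing 𝕜] {A : Matrix n n 𝕜} (hA : A.IsHermitian) (x y : n → 𝕜) :
    star (star x ⬝ᵥ (A *ᵥ y)) = star y ⬝ᵥ (A *ᵥ x) := by
  rw [star_dotProduct y, star_mulVec, hA.eq, dotProduct_mulVec]

theorem Matrix.IsHermitian.re_dotProduct_mulVec_sub_smul {n 𝕜 : Type*} [Fintype n] [RCLike 𝕜]
    {A : Matrix n n 𝕜} (hA : A.IsHermitian) (x y : n → 𝕜) (s : ℝ) :
    RCLike.re (star (x - (s : 𝕜) • y) ⬝ᵥ (A *ᵥ (x - (s : 𝕜) • y))) =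
      RCLike.re (star x ⬝ᵥ (A *ᵥ x)) - 2 * s * RCLike.re (star y ⬝ᵥ (A *ᵥ x)) +
        s ^ 2 * RCLike.re (star y ⬝ᵥ (A *ᵥ y)) := by
  have hswap : RCLike.re (star x ⬝ᵥ (A *ᵥ y)) = RCLike.re (star y ⬝ᵥ (A *ᵥ x)) := by
    rw [← hA.star_dotProduct_mulVec, RCLike.star_def, RCLike.conj_re]
  simp only [star_sub, star_smul, RCLike.star_def, RCLike.conj_ofReal, mulVec_sub, mulVec_smul,
    sub_dotProduct, dotProduct_sub, smul_dotProduct, dotProduct_smul, smul_eq_mul, map_sub,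
    RCLike.re_ofReal_mul, hswap]
  ring

theorem quadratic_le_at_vertex {a b c : ℝ} (hc : 0 < c) (s : ℝ) :
    a - b ^ 2 / c ≤ a - 2 * s * b + s ^ 2 * c := by
  have : 2 * s * b - s ^ 2 * c ≤ b ^ 2 / c := by
    rw [le_div_iff₀ hc]
    nlinarith [sq_nonneg (b - s * c)]
  linarith

theorem quadratic_at_vertex (a b : ℝ) {c : ℝ} (hc : c ≠ 0) :
    a - 2 * (b / c) * b + (b / c) ^ 2 * c = a - b ^ 2 / c := by
  field_simp
  ring

theorem stmt5_general (N : ℕ) (S : Matrix (Fin N) (Fin N) ℂ) (hS : S.PosDef)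
    (g : Fin N → ℂ) (hg : g ≠ 0) (z : Fin N → ℂ) :
    let f : ℝ → ℝ := fun s =>
      ((S + vecMulVec (z - (s : ℂ) • g) (star (z - (s : ℂ) • g))).det).re
    let shat : ℝ := (star g ⬝ᵥ (S⁻¹ *ᵥ z)).re / (star g ⬝ᵥ (S⁻¹ *ᵥ g)).re
    let V : ℝ := S.det.re * (1 + (star z ⬝ᵥ (S⁻¹ *ᵥ z)).re -
      (star g ⬝ᵥ (S⁻¹ *ᵥ z)).re ^ 2 / (star g ⬝ᵥ (S⁻¹ *ᵥ g)).re)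
    0 < S.det.re ∧ f shat = V ∧ ∀ s : ℝ, V ≤ f s := by
  intro f shat V
  set a := (star z ⬝ᵥ (S⁻¹ *ᵥ z)).re
  set b := (star g ⬝ᵥ (S⁻¹ *ᵥ z)).re
  set c := (star g ⬝ᵥ (S⁻¹ *ᵥ g)).re
  obtain ⟨hdet_re, hdet_im⟩ := Complex.pos_iff.mp hS.det_pos
  have hf (s : ℝ) : f s = S.det.re * (1 + (a - 2 * s * b + s ^ 2 * c)) := by
    have hquad : (star (z - (s : ℂ) • g) ⬝ᵥ (S⁻¹ *ᵥ (z - (s : ℂ) • g))).re =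
        a - 2 * s * b + s ^ 2 * c :=
      hS.inv.isHermitian.re_dotProduct_mulVec_sub_smul z g s
    simp only [f, det_add_vecMulVec hS.det_pos.ne'.isUnit, Complex.mul_re, ← hdet_im, zero_mul,
      sub_zero, Complex.add_re, Complex.one_re, hquad]
  have hc : 0 < c := hS.inv.re_dotProduct_pos hg
  refine ⟨hdet_re, ?_, fun s => ?_⟩
  · rw [hf, quadratic_at_vertex _ _ hc.ne', ← add_sub_assoc]
  · rw [hf]
    refine mul_le_mul_of_nonneg_left ?_ hdet_re.le
    linarith [quadratic_le_at_vertex (a := a) (b := b) hc s]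

/-- the minimum over `s ∈ ℝ` of `Re(det(S + (z − s·g)(z − s·g)ᴴ))` equals
`det(S)·(1 + Re(zᴴ S⁻¹ z) − (Re(gᴴ S⁻¹ z))²/(gᴴ S⁻¹ g))` (with `det S` a positive real),
attained at `ŝ = Re(gᴴ S⁻¹ z)/(gᴴ S⁻¹ g)`. -/
theorem stmt5 (N : ℕ) (hN : 0 < N) (S : Matrix (Fin N) (Fin N) ℂ) (hS : S.PosDef)
    (g : Fin N → ℂ) (hg : g ≠ 0) (z : Fin N → ℂ) :
    let f : ℝ → ℝ := fun s =>
      ((S + vecMulVec (z - (s : ℂ) • g) (star (z - (s : ℂ) • g))).det).re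
    let shat : ℝ := (star g ⬝ᵥ (S⁻¹ *ᵥ z)).re / (star g ⬝ᵥ (S⁻¹ *ᵥ g)).re
    let V : ℝ := S.det.re * (1 + (star z ⬝ᵥ (S⁻¹ *ᵥ z)).re -
      (star g ⬝ᵥ (S⁻¹ *ᵥ z)).re ^ 2 / (star g ⬝ᵥ (S⁻¹ *ᵥ g)).re)
    0 < S.det.re ∧ f shat = V ∧ ∀ s : ℝ, V ≤ f s :=
  stmt5_general N S hS g hg z
end

section
/- Let μ, Z, λ, x, φ ∈ ℂ with Z ≠ 0, define M₀(y) = [[cosh(μy), −(1/Z)·sinh(μy)], [−Z·sinh(μy), cosh(μy)]] and M₁(φ) = [[Z·sinh(μφ)·cosh(μ(x−φ)), −cosh(μφ)·cosh(μ(x−φ))], [−Z²·sinh(μφ)·sinh(μ(x−φ)), Z·cosh(μφ)·sinh(μ(x−φ))]]. Then M₀(x − φ) · [[1, −λ], [0, 1]] · M₀(φ) = M₀(x) + λ·M₁(φ). -/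
open Matrix

/-- The field matrix `M₀(y)` of an intact pipeline segment of length `y`, with
propagation function `μ` and characteristic impedance `Z`. -/
noncomputable def fieldMatrix (μ Z y : ℂ) : Matrix (Fin 2) (Fin 2) ℂ :=
  !![Complex.cosh (μ * y), -(1 / Z) * Complex.sinh (μ * y);
     -Z * Complex.sinh (μ * y), Complex.cosh (μ * y)]

/-- The leak matrix `M₁(φ)` for a leak at location `φ` in a pipe of length `x`. -/
noncomputable def leakMatrix (μ Z x φ : ℂ) : Matrix (Fin 2) (Fin 2) ℂ :=
  !![Z * Complex.sinh (μ * φ) * Complex.cosh (μ * (x - φ)),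
     -(Complex.cosh (μ * φ) * Complex.cosh (μ * (x - φ)));
     -(Z ^ 2 * Complex.sinh (μ * φ) * Complex.sinh (μ * (x - φ))),
     Z * Complex.cosh (μ * φ) * Complex.sinh (μ * (x - φ))]

/-!
The point matrix of the leak is `1 + λ N` with `N = [[0, −1], [0, 0]]`. By the addition
formulas for `cosh` and `sinh`, `y ↦ M₀(y)` is a one-parameter group, so the `λ`-free part
`M₀(x − φ) M₀(φ)` collapses to `M₀(x)`, while `M₀(x − φ) N M₀(φ)` is `M₁(φ)` entrywise.
-/

theorem fieldMatrix_mul_fieldMatrix {μ Z : ℂ} (hZ : Z ≠ 0) (a b : ℂ) :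
    fieldMatrix μ Z a * fieldMatrix μ Z b = fieldMatrix μ Z (a + b) := by
  rw [fieldMatrix, fieldMatrix, fieldMatrix, mul_fin_two, mul_add, Complex.cosh_add,
    Complex.sinh_add]
  ext i j
  fin_cases i <;> fin_cases j <;> simp <;> field_simp <;> ring

theorem fieldMatrix_mul_nilpotent_mul_fieldMatrix (μ Z x φ : ℂ) :
    fieldMatrix μ Z (x - φ) * !![0, -1; 0, 0] * fieldMatrix μ Z φ = leakMatrix μ Z x φ := by
  rw [fieldMatrix, fieldMatrix, leakMatrix, mul_fin_two, mul_fin_two]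
  ext i j
  fin_cases i <;> fin_cases j <;> simp <;> ring

theorem unitriangular_eq_one_add_smul {R : Type*} [Ring R] (c : R) :
    !![1, -c; 0, 1] = 1 + c • !![0, -1; 0, 0] := by
  ext i j
  fin_cases i <;> fin_cases j <;> simp

/-- the transfer-matrix decomposition
`M₀(x − φ) · [[1, −λ], [0, 1]] · M₀(φ) = M₀(x) + λ·M₁(φ)`. -/
theorem stmt9 (μ Z lam x φ : ℂ) (hZ : Z ≠ 0) :
    fieldMatrix μ Z (x - φ) * !![1, -lam; 0, 1] * fieldMatrix μ Z φ =
      fieldMatrix μ Z x + lam • leakMatrix μ Z x φ := by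
  rw [unitriangular_eq_one_add_smul, mul_add, add_mul, mul_one, fieldMatrix_mul_fieldMatrix hZ,
    sub_add_cancel, mul_smul_comm, smul_mul_assoc, fieldMatrix_mul_nilpotent_mul_fieldMatrix]
end

section
/- Let N be a positive natural number, let C be an N×N complex Hermitian positive semidefinite matrix, and let c > 0, ρ ∈ (0,1), and ρ̲ > 0 be real numbers. Then there exists a unique real number m > 0 satisfying m = ( ρ̲ + c·(1−ρ)·(1/N)·Re(tr(C·(I_N + (1−ρ)·m·C)⁻¹)) )⁻¹, i.e., the fixed-point equation m_N(−ρ̲) = (ρ̲ + c(1−ρ)(1/N)tr[C(I + (1−ρ)m C)⁻¹])⁻¹ defining the Stieltjes-transform quantity m_N(−ρ̲) has a unique positive solution. -/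
/-!
Let `λᵢ ≥ 0` be the eigenvalues of `C`. By the functional calculus the trace equals
`∑ λᵢ / (1 + (1 - ρ) m λᵢ)`, so for `m > 0` the equation reads `F m = 1` with
`F m = ρ̲ m + K ∑ m λᵢ / (1 + (1 - ρ) m λᵢ)` and `K = c (1 - ρ) / N ≥ 0`. Each summand is
nondecreasing in `m`, so `F` is continuous and strictly increasing on `[0, ∞)`, with `F 0 = 0`
and `F (1/ρ̲) ≥ 1`: the intermediate value theorem gives a root and strict monotonicity makes
it unique.
-/

open Matrix
open scoped ComplexOrder

namespace Matrix.IsHermitian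

variable {𝕜 n : Type*} [RCLike 𝕜] [Fintype n] [DecidableEq n] {A : Matrix n n 𝕜}

theorem trace_cfc (hA : A.IsHermitian) (f : ℝ → ℝ) :
    (cfc f A).trace = ∑ i, (f (hA.eigenvalues i) : 𝕜) := by
  rw [hA.cfc_eq, IsHermitian.cfc, Unitary.conjStarAlgAut_apply, trace_mul_cycle,
    Unitary.coe_star_mul_self, one_mul, trace_diagonal]
  rfl

theorem trace_mul_inv_one_add_smul (hA : A.IsHermitian) {t : ℝ}
    (ht : ∀ i, 1 + t * hA.eigenvalues i ≠ 0) :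
    (A * (1 + t • A)⁻¹).trace =
      ((∑ i, hA.eigenvalues i / (1 + t * hA.eigenvalues i) : ℝ) : 𝕜) := by
  have hne : ∀ x ∈ spectrum ℝ A, 1 + t * x ≠ 0 := by
    rw [hA.spectrum_real_eq_range_eigenvalues]
    rintro - ⟨i, rfl⟩
    exact ht i
  rw [RCLike.ofReal_sum, ← hA.trace_cfc (fun x ↦ x / (1 + t * x)), cfc_map_div _ _ A hne,
    cfc_id' ℝ A, cfc_const_add 1 (t * ·) A, cfc_const_mul_id t A, map_one,
    nonsing_inv_eq_ringInverse]

end Matrix.IsHermitian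

open Set

theorem existsUnique_pos_eq_inv_add {g : ℝ → ℝ} {a : ℝ} (ha : 0 < a)
    (hg : ContinuousOn g (Ici 0)) (hmono : MonotoneOn (fun m ↦ m * g m) (Ici 0)) :
    ∃! m : ℝ, 0 < m ∧ m = (a + g m)⁻¹ := by
  set F : ℝ → ℝ := fun m ↦ a * m + m * g m with hF
  have hF_strictMono : StrictMonoOn F (Ici 0) :=
    ((strictMono_mul_left_of_pos ha).strictMonoOn _).add_monotone hmono
  have hF_cont : ContinuousOn F (Ici 0) :=
    (continuousOn_const.mul continuousOn_id).add (continuousOn_id.mul hg)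
  have hF_zero : F 0 = 0 := by simp [hF]
  have hmul_nonneg : ∀ m ∈ Ici (0 : ℝ), 0 ≤ m * g m := fun m hm ↦ by
    simpa using hmono self_mem_Ici hm hm
  have hF_ge : 1 ≤ F a⁻¹ := by
    have := hmul_nonneg a⁻¹ (inv_pos.2 ha).le
    simp only [hF, mul_inv_cancel₀ ha.ne']
    linarith
  have hsol_iff : ∀ m, 0 < m → (m = (a + g m)⁻¹ ↔ F m = 1) := fun m hm ↦ by
    have hgm : 0 ≤ g m := nonneg_of_mul_nonneg_right (hmul_nonneg m hm.le) hm
    rw [← mul_eq_one_iff_eq_inv₀ (by positivity)]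
    simp only [hF]
    constructor <;> intro h <;> linarith
  obtain ⟨m, hm_mem, hFm⟩ := intermediate_value_Icc (inv_pos.2 ha).le
    (hF_cont.mono Icc_subset_Ici_self) ⟨hF_zero.trans_le zero_le_one, hF_ge⟩
  have hm : 0 < m := hm_mem.1.lt_of_ne (by rintro rfl; simp [hF_zero] at hFm)
  refine ⟨m, ⟨hm, (hsol_iff m hm).2 hFm⟩, fun m' ⟨hm', hm'_eq⟩ ↦ ?_⟩
  exact hF_strictMono.injOn hm'.le hm.le (((hsol_iff m' hm').1 hm'_eq).trans hFm.symm)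

section ResolventSum

variable {ι : Type*} [Fintype ι] {lam : ι → ℝ}

theorem continuousOn_sum_div_one_add_mul (hlam : ∀ i, 0 ≤ lam i) :
    ContinuousOn (fun t ↦ ∑ i, lam i / (1 + t * lam i)) (Ici 0) := by
  refine continuousOn_finsetSum _ fun i _ ↦ continuousOn_const.div (by fun_prop) fun t ht ↦ ?_
  have : 0 ≤ t * lam i := mul_nonneg ht (hlam i)
  positivity

theorem monotoneOn_mul_sum_div_one_add_mul (hlam : ∀ i, 0 ≤ lam i) {s : ℝ} (hs : 0 ≤ s) :
    MonotoneOn (fun m ↦ m * ∑ i, lam i / (1 + s * m * lam i)) (Ici 0) := by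
  intro x hx y hy hxy
  simp only [Finset.mul_sum]
  refine Finset.sum_le_sum fun i _ ↦ ?_
  have hxl : 0 ≤ s * x * lam i := mul_nonneg (mul_nonneg hs hx) (hlam i)
  have hyl : 0 ≤ s * y * lam i := mul_nonneg (mul_nonneg hs hy) (hlam i)
  rw [mul_div_assoc', mul_div_assoc', div_le_div_iff₀ (by positivity) (by positivity)]
  nlinarith [mul_le_mul_of_nonneg_right hxy (hlam i)]

end ResolventSum

theorem stmt12_general (N : ℕ) (C : Matrix (Fin N) (Fin N) ℂ)
    (hC : C.PosSemidef) (c ρ ρul : ℝ) (hc : 0 < c) (hρ : ρ ∈ Set.Ioo (0 : ℝ) 1)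
    (hρul : 0 < ρul) :
    ∃! m : ℝ, 0 < m ∧
      m = (ρul + c * (1 - ρ) * ((1 : ℝ) / N) *
        (Matrix.trace (C * ((1 : Matrix (Fin N) (Fin N) ℂ) + ((1 - ρ) * m) • C)⁻¹)).re)⁻¹ := by
  set lam := hC.1.eigenvalues
  have hlam : ∀ i, 0 ≤ lam i := hC.eigenvalues_nonneg
  have hs : 0 ≤ 1 - ρ := by linarith [hρ.2]
  have hK : 0 ≤ c * (1 - ρ) * ((1 : ℝ) / N) := by positivity
  have htrace : ∀ m ∈ Ici (0 : ℝ),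
      c * (1 - ρ) * ((1 : ℝ) / N) * (C * (1 + ((1 - ρ) * m) • C)⁻¹).trace.re
        = c * (1 - ρ) * ((1 : ℝ) / N) * ∑ i, lam i / (1 + (1 - ρ) * m * lam i) := by
    intro m hm
    have : ∀ i, 0 ≤ (1 - ρ) * m * lam i := fun i ↦ mul_nonneg (mul_nonneg hs hm) (hlam i)
    rw [hC.1.trace_mul_inv_one_add_smul fun i ↦ by linarith [this i]]
    exact congrArg _ (Complex.ofReal_re _)
  refine existsUnique_pos_eq_inv_add hρul ?_ ?_
  · refine ContinuousOn.congr ?_ htrace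
    exact continuousOn_const.mul ((continuousOn_sum_div_one_add_mul hlam).comp
      (continuousOn_const.mul continuousOn_id) fun m hm ↦ mul_nonneg hs hm)
  · intro x hx y hy hxy
    simp only [htrace x hx, htrace y hy, mul_left_comm _ (c * (1 - ρ) * ((1 : ℝ) / N))]
    exact mul_le_mul_of_nonneg_left (monotoneOn_mul_sum_div_one_add_mul hlam hs hx hy hxy) hK

/-- existence and uniqueness of the positive solution of the fixed-point
equation `m = (ρ̲ + c(1−ρ)(1/N)·Re tr[C(I + (1−ρ)m C)⁻¹])⁻¹` defining the
Stieltjes-transform quantity `m_N(−ρ̲)`. -/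
theorem stmt12 (N : ℕ) (hN : 0 < N) (C : Matrix (Fin N) (Fin N) ℂ)
    (hC : C.PosSemidef) (c ρ ρul : ℝ) (hc : 0 < c) (hρ : ρ ∈ Set.Ioo (0 : ℝ) 1)
    (hρul : 0 < ρul) :
    ∃! m : ℝ, 0 < m ∧
      m = (ρul + c * (1 - ρ) * ((1 : ℝ) / N) *
        (Matrix.trace (C * ((1 : Matrix (Fin N) (Fin N) ℂ) + ((1 - ρ) * m) • C)⁻¹)).re)⁻¹ :=
  stmt12_general N C hC c ρ ρul hc hρ hρul
end

section
/- Let N be a positive natural number, let R be an N×N complex Hermitian positive semidefinite matrix with Re(tr R) > 0, let g ∈ ℂ^N be nonzero, and let c ∈ (0,1] be a real constant. For ρ ∈ (0,1) define Ĉ(ρ) = (1−ρ)·(N/Re(tr R))·R + ρ·I_N and σ̂²(ρ) = (Re(tr R)/(2(1−ρ)N)) · (1 − ρ·(gᴴ Ĉ(ρ)⁻² g)/(gᴴ Ĉ(ρ)⁻¹ g)) / (1 − c + c·ρ·(1/N)·Re(tr Ĉ(ρ)⁻¹))². Then σ̂²(ρ) tends to (gᴴ R g)/(2·gᴴ g)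 as ρ tends to 1 from the left. -/
/-!
Write `Ĉ = (1 - ρ) A + ρ I` with `A = (N / tr R) R`. Expanding `Ĉ⁻¹ = Ĉ⁻¹ Ĉ Ĉ⁻¹` gives
`Ĉ⁻¹ = (1 - ρ) Ĉ⁻¹ A Ĉ⁻¹ + ρ Ĉ⁻²`, so `1 - ρ (gᴴ Ĉ⁻² g) / (gᴴ Ĉ⁻¹ g)` equals
`(1 - ρ) (gᴴ Ĉ⁻¹ A Ĉ⁻¹ g) / (gᴴ Ĉ⁻¹ g)` and the singular factor `1 / (1 - ρ)` cancels.
What is left is continuous at `ρ = 1`, where `Ĉ = I`, and its value there is the limit.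
-/

open Matrix Filter Topology
open scoped ComplexOrder

namespace Matrix

variable {n K : Type*}

def shrinkToOne [DecidableEq n] [Field K] [Algebra ℝ K] (A : Matrix n n K) (ρ : ℝ) : Matrix n n K :=
  (1 - ρ) • A + ρ • 1

section Field

variable [DecidableEq n] [Field K] [Algebra ℝ K] (A : Matrix n n K) {ρ : ℝ}

@[simp] lemma shrinkToOne_one : shrinkToOne A 1 = 1 := by simp [shrinkToOne]

lemma inv_shrinkToOne_eq [Fintype n] (h : IsUnit (shrinkToOne A ρ).det) :
    (shrinkToOne A ρ)⁻¹ = (1 - ρ) • ((shrinkToOne A ρ)⁻¹ * A * (shrinkToOne A ρ)⁻¹)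
      + ρ • (shrinkToOne A ρ)⁻¹ ^ 2 := by
  set C := shrinkToOne A ρ
  calc C⁻¹ = C⁻¹ * C * C⁻¹ := by rw [nonsing_inv_mul _ h, Matrix.one_mul]
    _ = _ := by simp only [C, shrinkToOne, Matrix.mul_add, Matrix.add_mul, Matrix.mul_smul,
      Matrix.smul_mul, Matrix.mul_one, sq]

end Field

section Normed

variable [DecidableEq n] [NormedField K] [NormedAlgebra ℝ K] (A : Matrix n n K)

lemma continuous_shrinkToOne : Continuous (shrinkToOne A) := by
  unfold shrinkToOne; fun_prop

lemma tendsto_inv_shrinkToOne [Fintype n] :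
    Tendsto (fun ρ => (shrinkToOne A ρ)⁻¹) (𝓝 1) (𝓝 1) := by
  have h := (continuousAt_matrix_inv (1 : Matrix n n K) ?_).tendsto.comp
    ((continuous_shrinkToOne A).tendsto' 1 1 (shrinkToOne_one A))
  · rwa [inv_one] at h
  · simpa using NormedRing.inverse_continuousAt (1 : Kˣ)

lemma eventually_isUnit_det_shrinkToOne [Fintype n] :
    ∀ᶠ ρ in 𝓝 1, IsUnit (shrinkToOne A ρ).det := by
  have h := ((continuous_id.matrix_det).tendsto' 1 1 det_one).comp
    ((continuous_shrinkToOne A).tendsto' 1 1 (shrinkToOne_one A))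
  filter_upwards [h.eventually_ne one_ne_zero] with ρ hρ
  exact hρ.isUnit

end Normed

section Quadratic

variable [Fintype n] (g : n → ℂ)

lemma re_dotProduct_smul_mulVec (r : ℝ) (M : Matrix n n ℂ) :
    (star g ⬝ᵥ ((r • M) *ᵥ g)).re = r * (star g ⬝ᵥ (M *ᵥ g)).re := by
  simp [smul_mulVec, dotProduct_smul, Complex.real_smul]

lemma tendsto_re_dotProduct_mulVec {l : Filter ℝ} {f : ℝ → Matrix n n ℂ} {M : Matrix n n ℂ}
    (hf : Tendsto f l (𝓝 M)) :
    Tendsto (fun ρ => (star g ⬝ᵥ (f ρ *ᵥ g)).re) l (𝓝 (star g ⬝ᵥ (M *ᵥ g)).re) :=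
  (Complex.continuous_re.comp
    (continuous_const.dotProduct (continuous_id.matrix_mulVec continuous_const))).tendsto M |>.comp hf

variable [DecidableEq n] (A : Matrix n n ℂ)

lemma tendsto_re_dotProduct_inv_shrinkToOne :
    Tendsto (fun ρ => (star g ⬝ᵥ ((shrinkToOne A ρ)⁻¹ *ᵥ g)).re) (𝓝 1) (𝓝 (star g ⬝ᵥ g).re) := by
  simpa using tendsto_re_dotProduct_mulVec g (tendsto_inv_shrinkToOne A)

lemma tendsto_re_dotProduct_inv_shrinkToOne_mul_mul :
    Tendsto (fun ρ => (star g ⬝ᵥ (((shrinkToOne A ρ)⁻¹ * A * (shrinkToOne A ρ)⁻¹) *ᵥ g)).re)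
      (𝓝 1) (𝓝 (star g ⬝ᵥ (A *ᵥ g)).re) := by
  have hinv := tendsto_inv_shrinkToOne A
  simpa using tendsto_re_dotProduct_mulVec g ((hinv.mul tendsto_const_nhds).mul hinv)

lemma tendsto_re_trace_inv_shrinkToOne :
    Tendsto (fun ρ => (trace (shrinkToOne A ρ)⁻¹).re) (𝓝 1) (𝓝 (Fintype.card n)) :=
  ((Complex.continuous_re.comp continuous_id.matrix_trace).tendsto' _ _ (by simp)).comp
    (tendsto_inv_shrinkToOne A)

lemma one_sub_div_re_dotProduct_inv_shrinkToOne {ρ : ℝ} (hC : IsUnit (shrinkToOne A ρ).det)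
    (hu : (star g ⬝ᵥ ((shrinkToOne A ρ)⁻¹ *ᵥ g)).re ≠ 0) :
    1 - ρ * (star g ⬝ᵥ ((shrinkToOne A ρ)⁻¹ ^ 2 *ᵥ g)).re
        / (star g ⬝ᵥ ((shrinkToOne A ρ)⁻¹ *ᵥ g)).re
      = (1 - ρ) * (star g ⬝ᵥ (((shrinkToOne A ρ)⁻¹ * A * (shrinkToOne A ρ)⁻¹) *ᵥ g)).re
        / (star g ⬝ᵥ ((shrinkToOne A ρ)⁻¹ *ᵥ g)).re := by
  have hsplit := congrArg (fun M => (star g ⬝ᵥ (M *ᵥ g)).re) (inv_shrinkToOne_eq A hC)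
  simp only [add_mulVec, dotProduct_add, Complex.add_re, re_dotProduct_smul_mulVec] at hsplit
  field_simp
  linarith

end Quadratic

end Matrix

theorem stmt14_general (N : ℕ) (hN : 0 < N) (R : Matrix (Fin N) (Fin N) ℂ)
    (htr : 0 < (Matrix.trace R).re)
    (g : Fin N → ℂ) (hg : g ≠ 0) (c : ℝ) :
    let Chat : ℝ → Matrix (Fin N) (Fin N) ℂ := fun ρ =>
      (1 - ρ) • (((N : ℝ) / (Matrix.trace R).re) • R) + ρ • (1 : Matrix (Fin N) (Fin N) ℂ)
    let σ2hat : ℝ → ℝ := fun ρ =>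
      ((Matrix.trace R).re / (2 * (1 - ρ) * (N : ℝ))) *
        (1 - ρ * (star g ⬝ᵥ ((((Chat ρ)⁻¹) ^ 2) *ᵥ g)).re /
          (star g ⬝ᵥ ((Chat ρ)⁻¹ *ᵥ g)).re) /
        (1 - c + c * ρ * ((1 : ℝ) / (N : ℝ)) * (Matrix.trace ((Chat ρ)⁻¹)).re) ^ 2
    Filter.Tendsto σ2hat (nhdsWithin 1 (Set.Ioo (0 : ℝ) 1))
      (nhds ((star g ⬝ᵥ (R *ᵥ g)).re / (2 * (star g ⬝ᵥ g).re))) := by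
  intro Chat σ2hat
  set A := ((N : ℝ) / (Matrix.trace R).re) • R
  have hN' : (N : ℝ) ≠ 0 := Nat.cast_ne_zero.mpr hN.ne'
  have hg' : (star g ⬝ᵥ g).re ≠ 0 :=
    (Complex.pos_iff.mp (dotProduct_star_self_pos_iff.mpr hg)).1.ne'
  have hu := tendsto_re_dotProduct_inv_shrinkToOne g A
  have hD := tendsto_const_nhds (x := 1 - c) |>.add
    ((((tendsto_const_nhds (x := c)).mul tendsto_id).mul (tendsto_const_nhds (x := (1 : ℝ) / N))).mul
      (tendsto_re_trace_inv_shrinkToOne A))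
  have hlim := (tendsto_const_nhds (x := (trace R).re / (2 * N))).mul
    ((tendsto_re_dotProduct_inv_shrinkToOne_mul_mul g A).div hu hg') |>.div (hD.pow 2)
      (by simp [hN'])
  have hvalue : (trace R).re / (2 * N) * ((star g ⬝ᵥ (A *ᵥ g)).re / (star g ⬝ᵥ g).re)
      / (1 - c + c * 1 * (1 / N) * Fintype.card (Fin N)) ^ 2
      = (star g ⬝ᵥ (R *ᵥ g)).re / (2 * (star g ⬝ᵥ g).re) := by
    simp only [A, re_dotProduct_smul_mulVec, Fintype.card_fin]
    field_simp
    ring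
  rw [hvalue] at hlim
  have hChat : ∀ ρ, Chat ρ = shrinkToOne A ρ := fun _ => rfl
  refine (hlim.mono_left nhdsWithin_le_nhds).congr' ?_
  filter_upwards [self_mem_nhdsWithin, nhdsWithin_le_nhds (eventually_isUnit_det_shrinkToOne A),
    nhdsWithin_le_nhds (hu.eventually_ne hg')] with ρ hρ hC hρu
  have h1ρ : 1 - ρ ≠ 0 := sub_ne_zero.mpr hρ.2.ne'
  simp only [σ2hat, hChat, id, Pi.div_apply, one_sub_div_re_dotProduct_inv_shrinkToOne g A hC hρu]
  field_simp

/-- the consistent scale estimator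
`σ̂²(ρ) = (tr R/(2(1−ρ)N)) · (1 − ρ (gᴴ Ĉ(ρ)⁻² g)/(gᴴ Ĉ(ρ)⁻¹ g)) / (1 − c + cρ(1/N) tr Ĉ(ρ)⁻¹)²`
built from the RSCM `Ĉ(ρ) = (1−ρ)(N/tr R)·R + ρ·I` tends to `gᴴ R g/(2 gᴴ g)` as
`ρ → 1⁻`. -/
theorem stmt14 (N : ℕ) (hN : 0 < N) (R : Matrix (Fin N) (Fin N) ℂ)
    (hR : R.PosSemidef) (htr : 0 < (Matrix.trace R).re)
    (g : Fin N → ℂ) (hg : g ≠ 0) (c : ℝ) (hc : c ∈ Set.Ioc (0 : ℝ) 1) :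
    let Chat : ℝ → Matrix (Fin N) (Fin N) ℂ := fun ρ =>
      (1 - ρ) • (((N : ℝ) / (Matrix.trace R).re) • R) + ρ • (1 : Matrix (Fin N) (Fin N) ℂ)
    let σ2hat : ℝ → ℝ := fun ρ =>
      ((Matrix.trace R).re / (2 * (1 - ρ) * (N : ℝ))) *
        (1 - ρ * (star g ⬝ᵥ ((((Chat ρ)⁻¹) ^ 2) *ᵥ g)).re /
          (star g ⬝ᵥ ((Chat ρ)⁻¹ *ᵥ g)).re) /
        (1 - c + c * ρ * ((1 : ℝ) / (N : ℝ)) * (Matrix.trace ((Chat ρ)⁻¹)).re) ^ 2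
    Filter.Tendsto σ2hat (nhdsWithin 1 (Set.Ioo (0 : ℝ) 1))
      (nhds ((star g ⬝ᵥ (R *ᵥ g)).re / (2 * (star g ⬝ᵥ g).re))) :=
  stmt14_general N hN R htr g hg c
end

section
/- Let N be a positive natural number, let R be an N×N complex Hermitian positive semidefinite matrix with Re(tr R) > 0, let g ∈ ℂ^N be a vector with gᴴ R g ≠ 0, and let c ∈ (0,1] be a real constant. For ρ ∈ (0,1) define Ĉ(ρ) = (1−ρ)·(N/Re(tr R))·R + ρ·I_N and θ̂(ρ) = ((1−ρ)N/Re(tr R)) · (1 − c + c·ρ·(1/N)·Re(tr Ĉ(ρ)⁻¹))² · (gᴴ Ĉ(ρ)⁻¹ g)² / (gᴴ Ĉ(ρ)⁻¹ g − ρ·gᴴ Ĉ(ρ)⁻² g). Then θ̂(ρ) tends to (gᴴ g)²/(gᴴ R g) as ρ tends to 1 from the left. -/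
/-!
Write `α = N / Re tr R`, so that `Ĉ(ρ) - ρ I = (1 - ρ) α R`. Multiplying this by `Ĉ(ρ)⁻¹` on both
sides gives `Ĉ⁻¹ - ρ Ĉ⁻² = (1 - ρ) Ĉ⁻¹ (α R) Ĉ⁻¹`, so the factor `1 - ρ` in the numerator of `θ̂`
cancels against the denominator and, for `ρ < 1`,
`θ̂(ρ) = α (1 - c + cρ tr Ĉ⁻¹ / N)² (gᴴ Ĉ⁻¹ g)² / gᴴ Ĉ⁻¹ (α R) Ĉ⁻¹ g`.
This is continuous in `Ĉ(ρ)⁻¹`, and `Ĉ(ρ)⁻¹ → I` as `ρ → 1`.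
-/

open Matrix Filter Topology
open scoped ComplexOrder

namespace Matrix

variable {n 𝕜 : Type*} [DecidableEq n] [RCLike 𝕜]

theorem tendsto_shrinkage_one (A : Matrix n n 𝕜) :
    Tendsto (fun ρ : ℝ => (1 - ρ) • A + ρ • (1 : Matrix n n 𝕜)) (𝓝 1) (𝓝 1) := by
  have hcont : Continuous fun ρ : ℝ => (1 - ρ) • A + ρ • (1 : Matrix n n 𝕜) := by fun_prop
  simpa using hcont.tendsto 1

variable [Fintype n]

theorem tendsto_inv_of_tendsto_one {α : Type*} {l : Filter α} {M : α → Matrix n n 𝕜}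
    (hM : Tendsto M l (𝓝 1)) : Tendsto (fun x => (M x)⁻¹) l (𝓝 1) := by
  have hinv : ContinuousAt Inv.inv (1 : Matrix n n 𝕜) :=
    continuousAt_matrix_inv _ (by simp)
  simpa [Function.comp_def] using hinv.tendsto.comp hM

theorem eventually_isUnit_det_of_tendsto_one {α : Type*} {l : Filter α} {M : α → Matrix n n 𝕜}
    (hM : Tendsto M l (𝓝 1)) : ∀ᶠ x in l, IsUnit (M x).det := by
  have hdet : Tendsto (fun x => (M x).det) l (𝓝 1) := by
    simpa [Function.comp_def] using (continuous_id.matrix_det.tendsto _).comp hM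
  filter_upwards [hdet.eventually_ne one_ne_zero] with x hx using isUnit_iff_ne_zero.mpr hx

theorem inv_sub_smul_inv_sq_of_eq_shrinkage {A C : Matrix n n 𝕜} {ρ : ℝ} (hC : IsUnit C.det)
    (hCA : C = (1 - ρ) • A + ρ • 1) :
    C⁻¹ - ρ • C⁻¹ ^ 2 = (1 - ρ) • (C⁻¹ * A * C⁻¹) :=
  calc C⁻¹ - ρ • C⁻¹ ^ 2 = C⁻¹ * (C - ρ • 1) * C⁻¹ := by
        rw [Matrix.mul_sub, Matrix.sub_mul, Matrix.mul_smul, mul_one, Matrix.smul_mul,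
          nonsing_inv_mul _ hC, one_mul, sq]
    _ = (1 - ρ) • (C⁻¹ * A * C⁻¹) := by
        rw [hCA, add_sub_cancel_right, Matrix.mul_smul, Matrix.smul_mul]

end Matrix

section QuadraticForm

variable {n : Type*} [Fintype n]

theorem tendsto_re_star_dotProduct_mulVec {α : Type*} {l : Filter α}
    {M : α → Matrix n n ℂ} {M₀ : Matrix n n ℂ} (hM : Tendsto M l (𝓝 M₀)) (g : n → ℂ) :
    Tendsto (fun x => (star g ⬝ᵥ (M x *ᵥ g)).re) l (𝓝 (star g ⬝ᵥ (M₀ *ᵥ g)).re) := by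
  have hcont : Continuous fun M : Matrix n n ℂ => (star g ⬝ᵥ (M *ᵥ g)).re := by fun_prop
  exact (hcont.tendsto M₀).comp hM

theorem re_star_dotProduct_sub_smul_mulVec (g : n → ℂ) (M₁ M₂ : Matrix n n ℂ) (t : ℝ) :
    (star g ⬝ᵥ ((M₁ - t • M₂) *ᵥ g)).re =
      (star g ⬝ᵥ (M₁ *ᵥ g)).re - t * (star g ⬝ᵥ (M₂ *ᵥ g)).re := by
  simp [sub_mulVec, smul_mulVec, dotProduct_sub, dotProduct_smul]

variable [DecidableEq n]

theorem re_star_dotProduct_inv_sub_inv_sq_of_eq_shrinkage (g : n → ℂ) {A C : Matrix n n ℂ}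
    {ρ : ℝ} (hC : IsUnit C.det) (hCA : C = (1 - ρ) • A + ρ • 1) :
    (star g ⬝ᵥ (C⁻¹ *ᵥ g)).re - ρ * (star g ⬝ᵥ (C⁻¹ ^ 2 *ᵥ g)).re =
      (1 - ρ) * (star g ⬝ᵥ ((C⁻¹ * A * C⁻¹) *ᵥ g)).re := by
  rw [← re_star_dotProduct_sub_smul_mulVec, inv_sub_smul_inv_sq_of_eq_shrinkage hC hCA,
    smul_mulVec, dotProduct_smul, Complex.smul_re, smul_eq_mul]

end QuadraticForm

theorem stmt15_general (N : ℕ) (hN : 0 < N) (R : Matrix (Fin N) (Fin N) ℂ)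
    (hR : R.PosSemidef) (htr : 0 < (Matrix.trace R).re)
    (g : Fin N → ℂ) (hgR : star g ⬝ᵥ (R *ᵥ g) ≠ 0) (c : ℝ) :
    let Chat : ℝ → Matrix (Fin N) (Fin N) ℂ := fun ρ =>
      (1 - ρ) • (((N : ℝ) / (Matrix.trace R).re) • R) + ρ • (1 : Matrix (Fin N) (Fin N) ℂ)
    let θhat : ℝ → ℝ := fun ρ =>
      ((1 - ρ) * (N : ℝ) / (Matrix.trace R).re) *
        (1 - c + c * ρ * ((1 : ℝ) / (N : ℝ)) * (Matrix.trace ((Chat ρ)⁻¹)).re) ^ 2 *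
        (star g ⬝ᵥ ((Chat ρ)⁻¹ *ᵥ g)).re ^ 2 /
        ((star g ⬝ᵥ ((Chat ρ)⁻¹ *ᵥ g)).re -
          ρ * (star g ⬝ᵥ ((((Chat ρ)⁻¹) ^ 2) *ᵥ g)).re)
    Filter.Tendsto θhat (nhdsWithin 1 (Set.Ioo (0 : ℝ) 1))
      (nhds ((star g ⬝ᵥ g).re ^ 2 / (star g ⬝ᵥ (R *ᵥ g)).re)) := by
  intro Chat θhat
  set α : ℝ := (N : ℝ) / (Matrix.trace R).re
  have hα : α ≠ 0 := (div_pos (Nat.cast_pos.mpr hN) htr).ne'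
  have hgRg : (star g ⬝ᵥ (R *ᵥ g)).re ≠ 0 := fun h =>
    hgR (Complex.ext h (hR.isHermitian.im_star_dotProduct_mulVec_self g))
  have hChat := tendsto_shrinkage_one (α • R)
  have hinv := tendsto_inv_of_tendsto_one hChat
  have hF : Tendsto (fun ρ => 1 - c + c * ρ * ((1 : ℝ) / (N : ℝ)) * (trace (Chat ρ)⁻¹).re)
      (𝓝 1) (𝓝 1) := by
    have htr1 : Tendsto (fun ρ => (trace (Chat ρ)⁻¹).re) (𝓝 1) (𝓝 N) := by
      simpa [Function.comp_def] using
        ((Complex.continuous_re.comp continuous_id.matrix_trace).tendsto 1).comp hinv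
    simpa [hN.ne'] using
      (((tendsto_id.const_mul c).mul_const ((1 : ℝ) / N)).mul htr1).const_add (1 - c)
  have hX := tendsto_re_star_dotProduct_mulVec hinv g
  have hY := tendsto_re_star_dotProduct_mulVec
    ((hinv.mul (tendsto_const_nhds (x := α • R))).mul hinv) g
  rw [mul_one, one_mul, smul_mulVec, dotProduct_smul, Complex.smul_re, smul_eq_mul] at hY
  have hlim := ((tendsto_const_nhds (x := α)).mul (hF.pow 2)).mul (hX.pow 2) |>.div hY
    (mul_ne_zero hα hgRg)
  rw [one_pow, mul_one, one_mulVec, mul_div_mul_left _ _ hα] at hlim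
  refine (hlim.mono_left nhdsWithin_le_nhds).congr' ?_
  filter_upwards [nhdsWithin_le_nhds (eventually_isUnit_det_of_tendsto_one hChat),
    self_mem_nhdsWithin] with ρ hdet hρ
  simp only [θhat, Chat, Pi.div_apply]
  rw [re_star_dotProduct_inv_sub_inv_sq_of_eq_shrinkage g hdet rfl,
    ← mul_div_mul_left _ _ (sub_ne_zero.2 hρ.2.ne')]
  ring

/-- the consistent noncentrality estimator
`θ̂(ρ) = ((1−ρ)N/tr R)·(1 − c + cρ(1/N) tr Ĉ(ρ)⁻¹)²·(gᴴ Ĉ(ρ)⁻¹ g)² /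
(gᴴ Ĉ(ρ)⁻¹ g − ρ gᴴ Ĉ(ρ)⁻² g)` built from the RSCM `Ĉ(ρ) = (1−ρ)(N/tr R)·R + ρ·I`
tends to `(gᴴ g)²/(gᴴ R g)` as `ρ → 1⁻`. -/
theorem stmt15 (N : ℕ) (hN : 0 < N) (R : Matrix (Fin N) (Fin N) ℂ)
    (hR : R.PosSemidef) (htr : 0 < (Matrix.trace R).re)
    (g : Fin N → ℂ) (hgR : star g ⬝ᵥ (R *ᵥ g) ≠ 0) (c : ℝ) (hc : c ∈ Set.Ioc (0 : ℝ) 1) :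
    let Chat : ℝ → Matrix (Fin N) (Fin N) ℂ := fun ρ =>
      (1 - ρ) • (((N : ℝ) / (Matrix.trace R).re) • R) + ρ • (1 : Matrix (Fin N) (Fin N) ℂ)
    let θhat : ℝ → ℝ := fun ρ =>
      ((1 - ρ) * (N : ℝ) / (Matrix.trace R).re) *
        (1 - c + c * ρ * ((1 : ℝ) / (N : ℝ)) * (Matrix.trace ((Chat ρ)⁻¹)).re) ^ 2 *
        (star g ⬝ᵥ ((Chat ρ)⁻¹ *ᵥ g)).re ^ 2 /
        ((star g ⬝ᵥ ((Chat ρ)⁻¹ *ᵥ g)).re -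
          ρ * (star g ⬝ᵥ ((((Chat ρ)⁻¹) ^ 2) *ᵥ g)).re)
    Filter.Tendsto θhat (nhdsWithin 1 (Set.Ioo (0 : ℝ) 1))
      (nhds ((star g ⬝ᵥ g).re ^ 2 / (star g ⬝ᵥ (R *ᵥ g)).re)) :=
  stmt15_general N hN R hR htr g hgR c
end

section
/- Let v > 0, α ≥ 0, and μ ∈ ℝ, set λ = μ²/v, and let X be a random variable with the real Gaussian distribution of mean μ and variance v. Then ℙ(X² ≤ α) = e^{−λ/2} · Σ_{j=0}^{∞} ((λ/2)^j / j!) · γ((1+2j)/2, α/(2v)) / Γ((1+2j)/2), where γ(r, x) = ∫_0^x t^{r−1} e^{−t} dt is the lower incomplete gamma function and Γ is the gamma function; i.e. X²/v has the noncentral chi-squared distribution with 1 degree of freedom and noncentrality λ, with CDF given by the Poisson mixture of central chi-squared CDFs. -/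
/-!
Fold the symmetric interval `[-√α, √α]` onto `[0, √α]`: the Gaussian density `φ` satisfies
`φ x + φ (-x) = 2 e^{-λ/2} e^{-x²/(2v)} cosh (x μ / v) / √(2πv)`. Expanding `cosh` in its
power series gives nonnegative terms, so the series may be integrated termwise. The
substitution `t = x² / (2v)` turns `∫₀^{√α} x^{2j} e^{-x²/(2v)} dx` into `γ(j + 1/2, α/(2v))`,
and `Γ(j + 1/2) = (2j)! √π / (4^j j!)` converts the Taylor coefficients of `cosh` into the
Poisson weights `e^{-λ/2} (λ/2)^j / j!`.
-/

open ProbabilityTheory MeasureTheory Real Set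
open scoped Nat NNReal

theorem Real.Gamma_nat_add_half_mul (k : ℕ) :
    Gamma (k + 1 / 2) * (4 ^ k * k !) = (2 * k)! * √π := by
  have hfact : ((2 * k)! : ℝ) = (2 * k - 1)‼ * (2 ^ k * k !) := by
    rcases k with _ | m
    · simp
    · rw [show 2 * (m + 1) - 1 = 2 * m + 1 by omega, show 2 * (m + 1) = 2 * m + 1 + 1 by ring,
        Nat.factorial_eq_mul_doubleFactorial, show 2 * m + 1 + 1 = 2 * (m + 1) by ring,
        Nat.doubleFactorial_two_mul]
      push_cast
      ring_nf
  rw [Gamma_nat_add_half, hfact,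
    show (4 : ℝ) ^ k = 2 ^ k * 2 ^ k by rw [← mul_pow]; norm_num]
  field_simp

theorem intervalIntegral.hasSum_integral_of_nonneg {F : ℕ → ℝ → ℝ} {f : ℝ → ℝ} {a b : ℝ}
    (hF : ∀ n, Continuous (F n)) (hF₀ : ∀ n x, 0 ≤ F n x)
    (hf : IntervalIntegrable f volume a b) (hFf : ∀ x, HasSum (fun n ↦ F n x) (f x)) :
    HasSum (fun n ↦ ∫ x in a..b, F n x) (∫ x in a..b, f x) := by
  refine hasSum_integral_of_dominated_convergence F (fun n ↦ (hF n).aestronglyMeasurable)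
    (fun n ↦ .of_forall fun x _ ↦ (Real.norm_of_nonneg (hF₀ n x)).le)
    (.of_forall fun x _ ↦ (hFf x).summable) ?_ (.of_forall fun x _ ↦ hFf x)
  simpa only [fun x ↦ (hFf x).tsum_eq] using hf

theorem integral_Icc_neg_eq_integral_add_comp_neg {g : ℝ → ℝ} {b : ℝ} (hb : 0 ≤ b)
    (hg : IntervalIntegrable g volume (-b) b) :
    ∫ x in Icc (-b) b, g x = ∫ x in 0..b, (g x + g (-x)) := by
  have hg₁ : IntervalIntegrable g volume (-b) 0 :=
    hg.mono_set (uIcc_subset_uIcc_left (by simp [hb]))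
  have hg₂ : IntervalIntegrable g volume 0 b :=
    hg.mono_set (uIcc_subset_uIcc_right (by simp [hb]))
  rw [integral_Icc_eq_integral_Ioc, ← intervalIntegral.integral_of_le (by linarith),
    ← intervalIntegral.integral_add_adjacent_intervals hg₁ hg₂,
    intervalIntegral.integral_add hg₂, intervalIntegral.integral_comp_neg, neg_zero, add_comm]
  simpa using (IntervalIntegrable.iff_comp_neg (f := g)).mp hg₁ |>.symm

theorem integral_pow_mul_exp_neg_sq_div (k : ℕ) {c b : ℝ} (hc : 0 < c) (hb : 0 ≤ b) :
    ∫ x in 0..b, x ^ (2 * k) * exp (-x ^ 2 / (2 * c)) =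
      (2 * c) ^ ((k : ℝ) + 1 / 2) / 2 *
        ∫ t in 0..b ^ 2 / (2 * c), t ^ ((k : ℝ) - 1 / 2) * exp (-t) := by
  have hderiv (x : ℝ) : HasDerivAt (fun x ↦ x ^ 2 / (2 * c)) (x / c) x := by
    refine ((hasDerivAt_pow 2 x).div_const (2 * c)).congr_deriv ?_
    field_simp
    norm_num
  -- this change of variables needs no continuity of the integrand, which fails at `0` for `k = 0`
  have hsubst := integral_Icc_deriv_smul_of_deriv_nonneg
    (g := fun t ↦ t ^ ((k : ℝ) - 1 / 2) * exp (-t))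
    (by fun_prop) (fun x _ ↦ hderiv x) (fun x hx ↦ div_nonneg hx.1.le hc.le) hb
  simp only [ne_eq, OfNat.ofNat_ne_zero, not_false_eq_true, zero_pow, zero_div,
    smul_eq_mul] at hsubst
  rw [intervalIntegral.integral_of_le hb, intervalIntegral.integral_of_le (by positivity),
    ← integral_Icc_eq_integral_Ioc (y := b ^ 2 / (2 * c)), ← hsubst, ← integral_const_mul,
    integral_Icc_eq_integral_Ioc]
  refine setIntegral_congr_fun measurableSet_Ioc fun x hx ↦ ?_
  have hx : 0 < x := hx.1
  have h2c : 0 < 2 * c := by positivity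
  rw [rpow_add h2c, rpow_sub (by positivity), rpow_natCast, rpow_natCast, ← sqrt_eq_rpow,
    ← sqrt_eq_rpow, sqrt_div' _ h2c.le, sqrt_sq hx.le, neg_div]
  have : 0 < √(2 * c) := sqrt_pos.2 h2c
  field_simp
  rw [sq_sqrt h2c.le, div_pow, ← pow_mul, mul_comm 2 k]
  field_simp

theorem gaussianPDFReal_add_gaussianPDFReal_neg (μ : ℝ) (v : ℝ≥0) (x : ℝ) :
    gaussianPDFReal μ v x + gaussianPDFReal μ v (-x) =
      2 * (√(2 * π * v))⁻¹ * exp (-(μ ^ 2 / v / 2)) *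
        (exp (-x ^ 2 / (2 * v)) * cosh (x * μ / v)) := by
  rw [gaussianPDFReal, gaussianPDFReal, cosh_eq,
    show -(x - μ) ^ 2 / (2 * v) = -(μ ^ 2 / v / 2) + (-x ^ 2 / (2 * v) + x * μ / v) by ring,
    show -(-x - μ) ^ 2 / (2 * v) = -(μ ^ 2 / v / 2) + (-x ^ 2 / (2 * v) - x * μ / v) by ring,
    sub_eq_add_neg]
  simp only [exp_add]
  ring

theorem gaussianReal_setOf_sq_le (μ : ℝ) {v : ℝ≥0} (hv : v ≠ 0) {α : ℝ} (hα : 0 ≤ α) :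
    gaussianReal μ v {x | x ^ 2 ≤ α} =
      ENNReal.ofReal (∫ x in 0..√α, gaussianPDFReal μ v x + gaussianPDFReal μ v (-x)) := by
  have hset : {x : ℝ | x ^ 2 ≤ α} = Icc (-√α) √α := by
    ext x
    exact sq_le hα
  rw [hset, gaussianReal_apply_eq_integral μ hv, integral_Icc_neg_eq_integral_add_comp_neg
    (sqrt_nonneg α) (integrable_gaussianPDFReal μ v).intervalIntegrable]

theorem hasSum_integral_gaussianPDFReal_add_neg (μ : ℝ) {v : ℝ≥0} (hv : v ≠ 0) {b : ℝ}
    (hb : 0 ≤ b) :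
    HasSum (fun j : ℕ ↦ exp (-(μ ^ 2 / v / 2)) * ((μ ^ 2 / v / 2) ^ j / j ! *
        ((∫ t in 0..b ^ 2 / (2 * v), t ^ ((1 + 2 * (j : ℝ)) / 2 - 1) * exp (-t)) /
          Gamma ((1 + 2 * (j : ℝ)) / 2))))
      (∫ x in 0..b, gaussianPDFReal μ v x + gaussianPDFReal μ v (-x)) := by
  have hv' : (0 : ℝ) < v := by positivity
  set C := 2 * (√(2 * π * v))⁻¹ * exp (-(μ ^ 2 / v / 2)) with hC
  have hC₀ : 0 ≤ C := by positivity
  simp only [gaussianPDFReal_add_gaussianPDFReal_neg]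
  have hcosh : HasSum
      (fun j : ℕ ↦
        ∫ x in 0..b, C * (exp (-x ^ 2 / (2 * v)) * ((x * μ / v) ^ (2 * j) / (2 * j)!)))
      (∫ x in 0..b, C * (exp (-x ^ 2 / (2 * v)) * cosh (x * μ / v))) :=
    intervalIntegral.hasSum_integral_of_nonneg (fun j ↦ by fun_prop)
      (fun j x ↦ mul_nonneg hC₀ (mul_nonneg (exp_pos _).le
        (div_nonneg ((even_two_mul j).pow_nonneg _) (Nat.cast_nonneg _))))
      ((by fun_prop : Continuous _).intervalIntegrable _ _)
      (fun x ↦ ((hasSum_cosh _).mul_left _).mul_left C)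
  convert hcosh using 2 with j
  have hterm :
      ∫ x in 0..b, C * (exp (-x ^ 2 / (2 * v)) * ((x * μ / v) ^ (2 * j) / (2 * j)!)) =
      C * ((μ / v) ^ (2 * j) / (2 * j)!) * ∫ x in 0..b, x ^ (2 * j) * exp (-x ^ 2 / (2 * v)) := by
    rw [← intervalIntegral.integral_const_mul]
    congr 1 with x
    ring
  rw [hterm, integral_pow_mul_exp_neg_sq_div j hv' hb,
    show (1 + 2 * (j : ℝ)) / 2 - 1 = j - 1 / 2 by ring,
    show (1 + 2 * (j : ℝ)) / 2 = j + 1 / 2 by ring,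
    eq_div_of_mul_eq (by positivity) (Gamma_nat_add_half_mul j), hC, rpow_add (by positivity),
    rpow_natCast, ← sqrt_eq_rpow, show 2 * π * v = π * (2 * v) by ring, sqrt_mul pi_pos.le,
    show (4 : ℝ) ^ j = 2 ^ j * 2 ^ j by rw [← mul_pow]; norm_num]
  have : 0 < √(2 * (v : ℝ)) := by positivity
  simp only [div_pow, mul_pow]
  field_simp
  ring

/-- the square of a Gaussian with mean `μ` and variance `v`, divided by `v`,
is noncentral chi-squared with 1 degree of freedom and noncentrality `λ = μ²/v`:
`ℙ(X² ≤ α) = e^{−λ/2} Σ_j ((λ/2)^j/j!) · γ((1+2j)/2, α/(2v))/Γ((1+2j)/2)`,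
the Poisson mixture of central chi-squared CDFs, with
`γ(r, x) = ∫_0^x t^{r−1} e^{−t} dt` the lower incomplete gamma function. -/
theorem stmt19 (v : NNReal) (hv : 0 < v) (α : ℝ) (hα : 0 ≤ α) (μ : ℝ) :
    let lam : ℝ := μ ^ 2 / (v : ℝ)
    (gaussianReal μ v) {x : ℝ | x ^ 2 ≤ α} =
      ENNReal.ofReal
        (Real.exp (-(lam / 2)) * ∑' j : ℕ, ((lam / 2) ^ j / (Nat.factorial j : ℝ)) *
          ((∫ t in (0 : ℝ)..(α / (2 * (v : ℝ))),
              t ^ (((1 + 2 * (j : ℝ)) / 2) - 1) * Real.exp (-t)) /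
            Real.Gamma ((1 + 2 * (j : ℝ)) / 2))) := by
  have hsum := hasSum_integral_gaussianPDFReal_add_neg μ hv.ne' (sqrt_nonneg α)
  rw [sq_sqrt hα] at hsum
  rw [gaussianReal_setOf_sq_le μ hv.ne' hα]
  exact congrArg ENNReal.ofReal (hsum.tsum_eq.symm.trans tsum_mul_left)
end
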